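/- Under Assumption [A2], fix T > 0 and t ∈ [0,T). For every y ∈ Y, the total outgoing rate of the ideal reverse process at reverse time t satisfies ∑_{y'≠y} R(y,y') · q_{T−t}(y') / q_{T−t}(y) ≤ numK(y) · K / (e^{T−t} − 1); equivalently, ∑_{i : y_i = K} ∑_{k=1}^{K−1} q_{T−t}(y[i→k]) / q_{T−t}(y) ≤ numK(y) · K / (e^{T−t} − 1). -/

import Mathlib

open Matrix Finset

/-- The mask token: token `K` in the vocabulary `{1,…,K}`, modeled as the last
element of `Fin K`. -/
def maskTok (K : ℕ) [NeZero K] : Fin K :=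
  ⟨K - 1, Nat.sub_lt (Nat.pos_of_ne_zero (NeZero.ne K)) Nat.one_pos⟩

/-- The number of mask tokens in a sequence. -/
def numK (K d : ℕ) [NeZero K] (y : Fin d → Fin K) : ℕ :=
  (Finset.univ.filter fun i => y i = maskTok K).card

/-- Hamming distance between two sequences. -/
def ham {K d : ℕ} (y y' : Fin d → Fin K) : ℕ :=
  (Finset.univ.filter fun i => y i ≠ y' i).card

/-- The masked (absorbing) forward transition-rate matrix: `R y y' = 1` if
`Ham(y,y') = 1` and the differing coordinate of `y` is the mask token,
`R y' y' = -(d - numK y')`, and `0` otherwise. -/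
noncomputable def fwdRate (K d : ℕ) [NeZero K] :
    Matrix (Fin d → Fin K) (Fin d → Fin K) ℝ := fun y y' =>
  if y = y' then -((d : ℝ) - (numK K d y' : ℝ))
  else if ham y y' = 1 ∧ ∀ i, y i ≠ y' i → y i = maskTok K then 1 else 0

/-- The forward marginal at time `t`: `q_t = exp(tR) · q₀`. -/
noncomputable def qt (K d : ℕ) [NeZero K] (q0 : (Fin d → Fin K) → ℝ) (t : ℝ) :
    (Fin d → Fin K) → ℝ :=
  NormedSpace.exp (t • fwdRate K d) *ᵥ q0

/-!
Since the tokens are noised independently, `exp (s • R)` is the product kernel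
`M_s(y, x) = ∏ i, p_s(y i, x i)`, where for an unmasked token `b` one has `p_s(b, b) = e^{-s}` and
`p_s(mask, b) = 1 - e^{-s}`; this follows from `M' = R M`, `M_0 = 1`. Let `i` be a masked
coordinate of `y` and `x` an unmasked state. Replacing `y i` by the tokens `k ≠ mask` replaces
the factor `1 - e^{-s}` by factors summing to `e^{-s}`, hence
`(e^s - 1) ∑ₖ M_s(y[i→k], x) = M_s(y, x)`. As `q₀` lives on unmasked states, the same holds for
`q_s`, and summing over the masked coordinates of `y` gives exactly `numK(y) / (e^s - 1)`.
-/

namespace Matrix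

variable {n : Type*} [Fintype n] [DecidableEq n]

open scoped Matrix.Norms.Operator in
theorem hasDerivAt_exp_smul_apply (A : Matrix n n ℝ) (t : ℝ) (i j : n) :
    HasDerivAt (fun u : ℝ => NormedSpace.exp (u • A) i j)
      ((NormedSpace.exp (t • A) * A) i j) t :=
  (entryLinearMap ℝ ℝ i j).toContinuousLinearMap.hasFDerivAt.comp_hasDerivAt t
    (hasDerivAt_exp_smul_const A t)

/-- `exp (-u • A) * M u` has zero derivative. -/
theorem exp_smul_eq_of_hasDerivAt {A : Matrix n n ℝ} {M : ℝ → Matrix n n ℝ}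
    (hM : ∀ u i j, HasDerivAt (fun v => M v i j) ((A * M u) i j) u) (hM0 : M 0 = 1) (s : ℝ) :
    NormedSpace.exp (s • A) = M s := by
  have hderiv : ∀ i j u,
      HasDerivAt (fun v => (NormedSpace.exp ((-v) • A) * M v) i j) 0 u := by
    intro i j u
    have hexp : ∀ k, HasDerivAt (fun v => NormedSpace.exp ((-v) • A) i k)
        (-(NormedSpace.exp ((-u) • A) * A) i k) u := fun k => by
      simpa [Function.comp_def] using
        (hasDerivAt_exp_smul_apply A (-u) i k).comp u (hasDerivAt_neg u)
    simp only [mul_apply]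
    refine (HasDerivAt.fun_sum fun k _ => (hexp k).mul (hM u k j)).congr_deriv ?_
    rw [Finset.sum_add_distrib]
    simp only [neg_mul, Finset.sum_neg_distrib, ← mul_apply, Matrix.mul_assoc, neg_add_cancel]
  have hone : ∀ u, NormedSpace.exp ((-u) • A) * M u = 1 := fun u => by
    ext i j
    rw [is_const_of_deriv_eq_zero (fun v => (hderiv i j v).differentiableAt)
      (fun v => (hderiv i j v).deriv) u 0, neg_zero, zero_smul, NormedSpace.exp_zero, hM0,
      Matrix.mul_one]
  have hinv : NormedSpace.exp (s • A) * NormedSpace.exp ((-s) • A) = 1 := by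
    rw [← exp_add_of_commute _ _ ((Commute.refl A).smul_left s |>.smul_right (-s)), ← add_smul,
      add_neg_cancel, zero_smul, NormedSpace.exp_zero]
  calc NormedSpace.exp (s • A)
        = NormedSpace.exp (s • A) * (NormedSpace.exp ((-s) • A) * M s) := by
          rw [hone, Matrix.mul_one]
    _ = M s := by rw [← Matrix.mul_assoc, hinv, Matrix.one_mul]

end Matrix

/-- Probability that a single token equal to `b` at time `0` equals `a` at time `s` under the
forward masking process. -/
noncomputable def maskKernel (K : ℕ) [NeZero K] (s : ℝ) (a b : Fin K) : ℝ :=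
  if a = b then (if b = maskTok K then 1 else Real.exp (-s))
  else if a = maskTok K then 1 - Real.exp (-s) else 0

section MaskKernel

variable {K : ℕ} [NeZero K]

lemma maskKernel_zero (a b : Fin K) :
    maskKernel K 0 a b = (1 : Matrix (Fin K) (Fin K) ℝ) a b := by
  simp [maskKernel, Matrix.one_apply]

lemma maskKernel_nonneg {s : ℝ} (hs : 0 ≤ s) (a b : Fin K) : 0 ≤ maskKernel K s a b := by
  have : Real.exp (-s) ≤ 1 := Real.exp_le_one_iff.mpr (by linarith)
  unfold maskKernel
  split_ifs <;> linarith [Real.exp_pos (-s)]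

lemma maskKernel_pos {s : ℝ} (hs : 0 < s) {a b : Fin K} (hb : b ≠ maskTok K)
    (hab : a = b ∨ a = maskTok K) : 0 < maskKernel K s a b := by
  have : Real.exp (-s) < 1 := Real.exp_lt_one_iff.mpr (by linarith)
  unfold maskKernel
  split_ifs <;> simp_all [Real.exp_pos]

lemma maskKernel_mask_left (s : ℝ) {b : Fin K} (hb : b ≠ maskTok K) :
    maskKernel K s (maskTok K) b = 1 - Real.exp (-s) := by
  simp [maskKernel, hb.symm]

lemma sum_maskKernel_ne_mask (s : ℝ) (b : Fin K) :
    ∑ a ∈ univ.filter (· ≠ maskTok K), maskKernel K s a b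
      = if b = maskTok K then 0 else Real.exp (-s) := by
  split_ifs with hb
  · exact sum_eq_zero fun a ha => by simp_all [maskKernel]
  · rw [sum_eq_single_of_mem b (by simpa using hb) fun a ha hab => by simp_all [maskKernel]]
    simp [maskKernel, hb]

lemma hasDerivAt_maskKernel (s : ℝ) (a b : Fin K) :
    HasDerivAt (fun u => maskKernel K u a b)
      (if a = maskTok K then ∑ c ∈ univ.filter (· ≠ maskTok K), maskKernel K s c b
        else -maskKernel K s a b) s := by
  have hexp : HasDerivAt (fun u => Real.exp (-u)) (-Real.exp (-s)) s := by
    simpa using (hasDerivAt_neg s).exp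
  rw [sum_maskKernel_ne_mask]
  rcases eq_or_ne a (maskTok K) with rfl | ha
  · rcases eq_or_ne b (maskTok K) with rfl | hb
    · simpa [maskKernel] using hasDerivAt_const s (1 : ℝ)
    · simpa [maskKernel, hb, Ne.symm hb] using hexp.const_sub 1
  · rcases eq_or_ne a b with rfl | hab
    · simpa [maskKernel, ha] using hexp
    · simpa [maskKernel, ha, hab] using hasDerivAt_const s (0 : ℝ)

end MaskKernel

lemma card_filter_ne_eq_one_iff {ι α : Type*} [Fintype ι] [DecidableEq ι] [DecidableEq α]
    {y y' : ι → α} :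
    #{j | y j ≠ y' j} = 1 ↔ ∃ i, y i ≠ y' i ∧ y' = Function.update y i (y' i) := by
  simp only [card_eq_one, eq_singleton_iff_unique_mem, mem_filter, mem_univ, true_and,
    Function.eq_update_iff]
  refine exists_congr fun i => and_congr_right fun _ => forall_congr' fun j => ?_
  rw [← not_imp_not, not_not, @eq_comm _ (y' j), ne_eq]

section ForwardRate

variable {K d : ℕ} [NeZero K]

lemma fwdRate_apply_of_ne {y y' : Fin d → Fin K} (h : y ≠ y') :
    fwdRate K d y y' = if ∃ i k, y i = maskTok K ∧ k ≠ maskTok K ∧ Function.update y i k = y'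
      then 1 else 0 := by
  rw [fwdRate, if_neg h]
  refine if_congr ?_ rfl rfl
  rw [ham, card_filter_ne_eq_one_iff]
  constructor
  · rintro ⟨⟨i, hi, hy'⟩, hmask⟩
    have hyi := hmask i hi
    exact ⟨i, y' i, hyi, fun h => hi (hyi.trans h.symm), hy'.symm⟩
  · rintro ⟨i, k, hyi, hk, rfl⟩
    refine ⟨⟨i, by simp [hyi, Ne.symm hk], by simp⟩, fun j hj => ?_⟩
    rcases eq_or_ne j i with rfl | hji
    · exact hyi
    · simp [Function.update_of_ne hji] at hj

lemma sum_erase_fwdRate_mul (y : Fin d → Fin K) (g : (Fin d → Fin K) → ℝ) :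
    ∑ y' ∈ univ.erase y, fwdRate K d y y' * g y'
      = ∑ i ∈ univ.filter (fun i => y i = maskTok K), ∑ k ∈ univ.filter (· ≠ maskTok K),
          g (Function.update y i k) := by
  have hinj : Set.InjOn (fun p : Fin d × Fin K => Function.update y p.1 p.2)
      ↑(univ.filter (fun i => y i = maskTok K) ×ˢ univ.filter (· ≠ maskTok K)) := by
    rintro ⟨i, k⟩ hik ⟨i', k'⟩ - heq
    simp only [coe_product, coe_filter, Set.mem_prod, Set.mem_ofPred_eq, mem_univ, true_and] at hik
    have hi : Function.update y i k i = Function.update y i' k' i := congrFun heq i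
    rcases eq_or_ne i i' with rfl | hii
    · simp_all
    · rw [Function.update_self, Function.update_of_ne hii, hik.1] at hi
      exact (hik.2 hi).elim
  rw [← sum_product', ← sum_image (f := g) hinj]
  symm
  refine sum_subset_zero_on_sdiff ?_ (fun y' hy' => ?_) (fun y' hy' => ?_)
  · intro y' hy'
    simp only [mem_image, mem_product, mem_filter, mem_univ, true_and, Prod.exists] at hy'
    obtain ⟨i, k, ⟨hyi, hk⟩, rfl⟩ := hy'
    exact mem_erase.2 ⟨fun h => hk (by simpa [hyi] using congrFun h i), mem_univ _⟩
  · obtain ⟨hy'y, hy'⟩ := mem_sdiff.1 hy'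
    simp only [mem_image, mem_product, mem_filter, mem_univ, true_and, Prod.exists,
      not_exists, not_and, and_imp] at hy'
    rw [fwdRate_apply_of_ne (ne_of_mem_erase hy'y).symm, if_neg, zero_mul]
    rintro ⟨i, k, hyi, hk, rfl⟩
    exact hy' i k hyi hk rfl
  · simp only [mem_image, mem_product, mem_filter, mem_univ, true_and, Prod.exists] at hy'
    obtain ⟨i, k, ⟨hyi, hk⟩, rfl⟩ := hy'
    rw [fwdRate_apply_of_ne, if_pos ⟨i, k, hyi, hk, rfl⟩, one_mul]
    exact fun h => hk (by simpa [hyi] using (congrFun h i).symm)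

end ForwardRate

noncomputable def maskProductKernel (K d : ℕ) [NeZero K] (s : ℝ) :
    Matrix (Fin d → Fin K) (Fin d → Fin K) ℝ :=
  fun y x => ∏ i, maskKernel K s (y i) (x i)

section ProductKernel

variable {K d : ℕ} [NeZero K]

lemma maskProductKernel_zero : maskProductKernel K d 0 = 1 := by
  ext y x
  simp [maskProductKernel, maskKernel_zero, Matrix.one_apply, prod_boole, funext_iff]

lemma maskProductKernel_update (s : ℝ) (y x : Fin d → Fin K) (i : Fin d) (k : Fin K) :
    maskProductKernel K d s (Function.update y i k) x
      = maskKernel K s k (x i) * ∏ j ∈ univ.erase i, maskKernel K s (y j) (x j) := by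
  rw [maskProductKernel, ← mul_prod_erase univ _ (mem_univ i), Function.update_self]
  congr 1
  exact prod_congr rfl fun j hj => by rw [Function.update_of_ne (ne_of_mem_erase hj)]

lemma card_filter_ne_maskTok (y : Fin d → Fin K) :
    (#{i | y i ≠ maskTok K} : ℝ) = d - numK K d y := by
  have h := card_filter_add_card_filter_not (s := univ) (fun i => y i = maskTok K)
  rw [card_univ, Fintype.card_fin] at h
  rw [numK, eq_sub_iff_add_eq, ← Nat.cast_add, add_comm, h]

lemma fwdRate_mul_maskProductKernel_apply (s : ℝ) (y x : Fin d → Fin K) :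
    (fwdRate K d * maskProductKernel K d s) y x
      = ∑ i, (if y i = maskTok K then ∑ c ∈ univ.filter (· ≠ maskTok K), maskKernel K s c (x i)
          else -maskKernel K s (y i) (x i)) * ∏ j ∈ univ.erase i, maskKernel K s (y j) (x j) := by
  rw [mul_apply, ← add_sum_erase _ _ (mem_univ y), sum_erase_fwdRate_mul,
    ← sum_filter_add_sum_filter_not univ (fun i => y i = maskTok K), add_comm]
  congr 1
  · refine sum_congr rfl fun i hi => ?_
    rw [if_pos (mem_filter.1 hi).2, sum_mul]
    exact sum_congr rfl fun k _ => maskProductKernel_update s y x i k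
  · have hunmasked : ∀ i ∈ univ.filter (fun i => ¬y i = maskTok K),
        (if y i = maskTok K then ∑ c ∈ univ.filter (· ≠ maskTok K), maskKernel K s c (x i)
          else -maskKernel K s (y i) (x i)) * ∏ j ∈ univ.erase i, maskKernel K s (y j) (x j)
          = -maskProductKernel K d s y x := fun i hi => by
      rw [if_neg (mem_filter.1 hi).2, neg_mul, maskProductKernel,
        ← mul_prod_erase univ _ (mem_univ i)]
    rw [sum_congr rfl hunmasked, sum_const, nsmul_eq_mul, card_filter_ne_maskTok, fwdRate,
      if_pos rfl]
    ring

lemma hasDerivAt_maskProductKernel (s : ℝ) (y x : Fin d → Fin K) :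
    HasDerivAt (fun u => maskProductKernel K d u y x)
      ((fwdRate K d * maskProductKernel K d s) y x) s := by
  rw [fwdRate_mul_maskProductKernel_apply]
  refine (HasDerivAt.fun_finsetProd fun i _ => hasDerivAt_maskKernel s (y i) (x i)).congr_deriv ?_
  simp only [smul_eq_mul, mul_comm]

lemma exp_smul_fwdRate (s : ℝ) :
    NormedSpace.exp (s • fwdRate K d) = maskProductKernel K d s :=
  Matrix.exp_smul_eq_of_hasDerivAt (fun u y x => hasDerivAt_maskProductKernel u y x)
    maskProductKernel_zero s

lemma qt_apply (q0 : (Fin d → Fin K) → ℝ) (s : ℝ) (y : Fin d → Fin K) :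
    qt K d q0 s y = ∑ x, maskProductKernel K d s y x * q0 x := by
  rw [qt, exp_smul_fwdRate]
  rfl

end ProductKernel

section Marginal

variable {K d : ℕ} [NeZero K]

lemma numK_eq_zero_iff (x : Fin d → Fin K) : numK K d x = 0 ↔ ∀ i, x i ≠ maskTok K := by
  simp [numK, filter_eq_empty_iff]

lemma exp_sub_one_mul_sum_maskProductKernel_update (s : ℝ) {y x : Fin d → Fin K} {i : Fin d}
    (hyi : y i = maskTok K) (hxi : x i ≠ maskTok K) :
    (Real.exp s - 1) * ∑ k ∈ univ.filter (· ≠ maskTok K),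
        maskProductKernel K d s (Function.update y i k) x
      = maskProductKernel K d s y x := by
  simp only [maskProductKernel_update, ← sum_mul, sum_maskKernel_ne_mask, if_neg hxi]
  rw [maskProductKernel, ← mul_prod_erase univ _ (mem_univ i), hyi, maskKernel_mask_left s hxi,
    ← mul_assoc, Real.exp_neg]
  congr 1
  field_simp

lemma exp_sub_one_mul_sum_qt_update {q0 : (Fin d → Fin K) → ℝ}
    (hsupp : ∀ x, q0 x ≠ 0 → ∀ j, x j ≠ maskTok K) (s : ℝ) {y : Fin d → Fin K} {i : Fin d}
    (hyi : y i = maskTok K) :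
    (Real.exp s - 1) * ∑ k ∈ univ.filter (· ≠ maskTok K), qt K d q0 s (Function.update y i k)
      = qt K d q0 s y := by
  simp only [qt_apply]
  rw [sum_comm, mul_sum]
  refine sum_congr rfl fun x _ => ?_
  by_cases hx : q0 x = 0
  · simp [hx]
  · rw [← sum_mul, ← mul_assoc,
      exp_sub_one_mul_sum_maskProductKernel_update s hyi (hsupp x hx i)]

lemma qt_pos {q0 : (Fin d → Fin K) → ℝ} (hq0 : ∀ x, 0 ≤ q0 x)
    (hpos : ∀ x, (∀ i, x i ≠ maskTok K) → 0 < q0 x) {k₀ : Fin K} (hk₀ : k₀ ≠ maskTok K)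
    {s : ℝ} (hs : 0 < s) (y : Fin d → Fin K) : 0 < qt K d q0 s y := by
  set x₀ : Fin d → Fin K := fun i => if y i = maskTok K then k₀ else y i
  have hx₀ : ∀ i, x₀ i ≠ maskTok K := fun i => by
    dsimp only [x₀]
    split_ifs with h
    exacts [hk₀, h]
  have hy : ∀ i, y i = x₀ i ∨ y i = maskTok K := fun i => by
    dsimp only [x₀]
    split_ifs with h
    exacts [Or.inr h, Or.inl rfl]
  rw [qt_apply]
  refine sum_pos'
    (fun x _ => mul_nonneg (prod_nonneg fun i _ => maskKernel_nonneg hs.le _ _) (hq0 x))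
    ⟨x₀, mem_univ _, mul_pos (prod_pos fun i _ => maskKernel_pos hs (hx₀ i) (hy i)) (hpos x₀ hx₀)⟩

lemma sum_sum_qt_update_div {q0 : (Fin d → Fin K) → ℝ} (hq0 : ∀ x, 0 ≤ q0 x)
    (hpos : ∀ x, (∀ i, x i ≠ maskTok K) → 0 < q0 x)
    (hsupp : ∀ x, q0 x ≠ 0 → ∀ j, x j ≠ maskTok K) {k₀ : Fin K} (hk₀ : k₀ ≠ maskTok K)
    {s : ℝ} (hs : 0 < s) (y : Fin d → Fin K) :
    ∑ i ∈ univ.filter (fun i => y i = maskTok K), ∑ k ∈ univ.filter (· ≠ maskTok K),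
        qt K d q0 s (Function.update y i k) / qt K d q0 s y
      = numK K d y / (Real.exp s - 1) := by
  have hQ := (qt_pos hq0 hpos hk₀ hs y).ne'
  have hexp : Real.exp s - 1 ≠ 0 := by linarith [Real.add_one_lt_exp hs.ne']
  have hcoord : ∀ i ∈ univ.filter (fun i => y i = maskTok K),
      ∑ k ∈ univ.filter (· ≠ maskTok K), qt K d q0 s (Function.update y i k) / qt K d q0 s y
        = 1 / (Real.exp s - 1) := fun i hi => by
    rw [← sum_div, div_eq_div_iff hQ hexp, one_mul, mul_comm,
      exp_sub_one_mul_sum_qt_update hsupp s (mem_filter.1 hi).2]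
  rw [sum_congr rfl hcoord, sum_const, nsmul_eq_mul, numK, mul_one_div]

end Marginal

theorem reverse_outgoing_rate_bound_general (K d : ℕ) [NeZero K] (hK : 2 ≤ K)
    (q0 : (Fin d → Fin K) → ℝ)
    (hq0nonneg : ∀ y, 0 ≤ q0 y)
    (hA2 : ∀ y, 0 < q0 y ↔ numK K d y = 0)
    (T t : ℝ) (htT : t < T) (y : Fin d → Fin K) :
    (∑ y' ∈ Finset.univ.erase y,
        fwdRate K d y y' * qt K d q0 (T - t) y' / qt K d q0 (T - t) y
      ≤ (numK K d y : ℝ) * K / (Real.exp (T - t) - 1)) ∧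
    (∑ i ∈ Finset.univ.filter (fun i : Fin d => y i = maskTok K),
        ∑ k ∈ Finset.univ.filter (fun k : Fin K => k ≠ maskTok K),
          qt K d q0 (T - t) (Function.update y i k) / qt K d q0 (T - t) y
      ≤ (numK K d y : ℝ) * K / (Real.exp (T - t) - 1)) := by
  have hs : 0 < T - t := sub_pos.2 htT
  have hpos : ∀ x, (∀ i, x i ≠ maskTok K) → 0 < q0 x := fun x hx =>
    (hA2 x).2 ((numK_eq_zero_iff x).2 hx)
  have hsupp : ∀ x, q0 x ≠ 0 → ∀ i, x i ≠ maskTok K := fun x hx =>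
    (numK_eq_zero_iff x).1 ((hA2 x).1 ((hq0nonneg x).lt_of_ne' hx))
  have hk₀ : (⟨0, by omega⟩ : Fin K) ≠ maskTok K := by
    simp only [maskTok, ne_eq, Fin.mk.injEq]
    omega
  have hsum := sum_sum_qt_update_div hq0nonneg hpos hsupp hk₀ hs y
  have hbound : (numK K d y : ℝ) / (Real.exp (T - t) - 1)
      ≤ (numK K d y : ℝ) * K / (Real.exp (T - t) - 1) :=
    div_le_div_of_nonneg_right
      (le_mul_of_one_le_right (Nat.cast_nonneg _) (by exact_mod_cast NeZero.one_le))
      (by linarith [Real.add_one_le_exp (T - t)])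
  rw [← hsum] at hbound
  refine ⟨Eq.trans_le ?_ hbound, hbound⟩
  simp only [mul_div_assoc]
  exact sum_erase_fwdRate_mul y _

/-- Under Assumption [A2], the total outgoing rate of the ideal reverse process at
reverse time `t` is bounded by `numK(y)·K/(e^{T-t} - 1)`. The second form writes
the same sum over masked coordinates and non-mask tokens. -/
theorem reverse_outgoing_rate_bound (K d : ℕ) [NeZero K] (hK : 2 ≤ K) (hd : 1 ≤ d)
    (q0 : (Fin d → Fin K) → ℝ)
    (hq0nonneg : ∀ y, 0 ≤ q0 y) (hq0sum : ∑ y, q0 y = 1)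
    (hA2 : ∀ y, 0 < q0 y ↔ numK K d y = 0)
    (T t : ℝ) (hT : 0 < T) (ht0 : 0 ≤ t) (htT : t < T) (y : Fin d → Fin K) :
    (∑ y' ∈ Finset.univ.erase y,
        fwdRate K d y y' * qt K d q0 (T - t) y' / qt K d q0 (T - t) y
      ≤ (numK K d y : ℝ) * K / (Real.exp (T - t) - 1)) ∧
    (∑ i ∈ Finset.univ.filter (fun i : Fin d => y i = maskTok K),
        ∑ k ∈ Finset.univ.filter (fun k : Fin K => k ≠ maskTok K),
          qt K d q0 (T - t) (Function.update y i k) / qt K d q0 (T - t) y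
      ≤ (numK K d y : ℝ) * K / (Real.exp (T - t) - 1)) :=
  reverse_outgoing_rate_bound_general K d hK q0 hq0nonneg hA2 T t htT y
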